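/- arXiv:1005.0973 — 3 statements merged into one kernel-verified Lean document; each statement's English description precedes it below -/
import Mathlib

section
/- Let d ≥ 2 and let γ : ℝ → ℝ^d be continuous on a nondegenerate interval I. Then at least one of the following holds: (a) every chord of γ is timelike, i.e. for all x, y ∈ I with x ≠ y the vector γ(x) − γ(y) is timelike; (b) every chord of γ is spacelike; (c) some chord of γ is lightlike, i.e. there exist x, y ∈ I with x ≠ y such that γ(x) − γ(y) is lightlike. -/
/-!
The Minkowski square of the chord, `(x, y) ↦ minkowskiSq (γ x - γ y)`, is continuous and symmetric in
`(x, y)`. On the convex, hence connected, set of pairs `x < y` in `I` it either has a constant sign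
or vanishes somewhere by the intermediate value theorem; symmetry carries the sign over to all pairs
`x ≠ y`.
-/

open Finset

theorem IsPreconnected.forall_lt_or_forall_gt_or_exists_eq {X α : Type*} [TopologicalSpace X]
    [LinearOrder α] [TopologicalSpace α] [OrderClosedTopology α] {S : Set X}
    (hS : IsPreconnected S) {f : X → α} (hf : ContinuousOn f S) (c : α) :
    (∀ p ∈ S, c < f p) ∨ (∀ p ∈ S, f p < c) ∨ ∃ p ∈ S, f p = c := by
  by_contra! h
  obtain ⟨⟨a, haS, ha⟩, ⟨b, hbS, hb⟩, hne⟩ := h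
  obtain ⟨p, hpS, hp⟩ := hS.intermediate_value haS hbS hf ⟨ha, hb⟩
  exact hne p hpS hp

theorem Set.OrdConnected.isPreconnected_prod_inter_setOf_lt {I : Set ℝ} (hI : I.OrdConnected) :
    IsPreconnected (I ×ˢ I ∩ {p : ℝ × ℝ | p.1 < p.2}) := by
  have hlt : Convex ℝ {p : ℝ × ℝ | p.1 - p.2 < 0} :=
    convex_halfSpace_lt IsLinearMap.isLinearMap_sub 0
  simp only [sub_neg] at hlt
  exact ((hI.convex.prod hI.convex).inter hlt).isPreconnected

theorem Set.OrdConnected.forall_pos_or_forall_neg_or_exists_eq_zero_of_symm {I : Set ℝ}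
    (hI : I.OrdConnected) {F : ℝ → ℝ → ℝ} (hF : ContinuousOn (fun p : ℝ × ℝ => F p.1 p.2) (I ×ˢ I))
    (hsymm : ∀ x y, F x y = F y x) :
    (∀ x ∈ I, ∀ y ∈ I, x ≠ y → 0 < F x y) ∨ (∀ x ∈ I, ∀ y ∈ I, x ≠ y → F x y < 0) ∨
      ∃ x ∈ I, ∃ y ∈ I, x ≠ y ∧ F x y = 0 := by
  have of_ordered {P : ℝ → Prop} (h : ∀ p ∈ I ×ˢ I ∩ {p | p.1 < p.2}, P (F p.1 p.2)) :
      ∀ x ∈ I, ∀ y ∈ I, x ≠ y → P (F x y) := by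
    intro x hx y hy hxy
    rcases hxy.lt_or_gt with hlt | hgt
    · exact h (x, y) ⟨⟨hx, hy⟩, hlt⟩
    · exact hsymm x y ▸ h (y, x) ⟨⟨hy, hx⟩, hgt⟩
  rcases hI.isPreconnected_prod_inter_setOf_lt.forall_lt_or_forall_gt_or_exists_eq
      (hF.mono Set.inter_subset_left) 0 with hpos | hneg | ⟨⟨x, y⟩, ⟨⟨hx, hy⟩, hxy⟩, hzero⟩
  · exact Or.inl (of_ordered (P := (0 < ·)) hpos)
  · exact Or.inr (Or.inl (of_ordered (P := (· < 0)) hneg))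
  · exact Or.inr (Or.inr ⟨x, hx, y, hy, hxy.ne, hzero⟩)

def minkowskiSq {d : ℕ} [NeZero d] (v : Fin d → ℝ) : ℝ :=
  v 0 ^ 2 - ∑ i ∈ univ.erase (0 : Fin d), v i ^ 2

theorem minkowskiSq_neg {d : ℕ} [NeZero d] (v : Fin d → ℝ) : minkowskiSq (-v) = minkowskiSq v := by
  simp only [minkowskiSq, Pi.neg_apply, neg_sq]

theorem continuous_minkowskiSq {d : ℕ} [NeZero d] : Continuous (minkowskiSq (d := d)) := by
  unfold minkowskiSq
  fun_prop

theorem continuous_curve_stl_ftl_or_lightlike_chord_general (d : ℕ) [NeZero d]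
    (I : Set ℝ) (hI : I.OrdConnected)
    (γ : ℝ → Fin d → ℝ) (hγ : ContinuousOn γ I) :
    (∀ x ∈ I, ∀ y ∈ I, x ≠ y →
        ∑ i ∈ Finset.univ.erase (0 : Fin d), (γ x i - γ y i) ^ 2 < (γ x 0 - γ y 0) ^ 2) ∨
    (∀ x ∈ I, ∀ y ∈ I, x ≠ y →
        (γ x 0 - γ y 0) ^ 2 < ∑ i ∈ Finset.univ.erase (0 : Fin d), (γ x i - γ y i) ^ 2) ∨
    (∃ x ∈ I, ∃ y ∈ I, x ≠ y ∧
        (γ x 0 - γ y 0) ^ 2 = ∑ i ∈ Finset.univ.erase (0 : Fin d), (γ x i - γ y i) ^ 2) := by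
  have hcont : ContinuousOn (fun p : ℝ × ℝ => minkowskiSq (γ p.1 - γ p.2)) (I ×ˢ I) :=
    continuous_minkowskiSq.comp_continuousOn
      ((hγ.comp continuousOn_fst fun _ hp => hp.1).sub (hγ.comp continuousOn_snd fun _ hp => hp.2))
  have hsymm (x y : ℝ) : minkowskiSq (γ x - γ y) = minkowskiSq (γ y - γ x) := by
    rw [← neg_sub, minkowskiSq_neg]
  simpa only [minkowskiSq, Pi.sub_apply, sub_pos, sub_neg, sub_eq_zero] using
    hI.forall_pos_or_forall_neg_or_exists_eq_zero_of_symm hcont hsymm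

/-- A continuous curve is STL, FTL, or has a lightlike chord. -/
theorem continuous_curve_stl_ftl_or_lightlike_chord (d : ℕ) [NeZero d] (hd : 2 ≤ d)
    (I : Set ℝ) (hI : I.OrdConnected) (hI2 : ∃ x ∈ I, ∃ y ∈ I, x ≠ y)
    (γ : ℝ → Fin d → ℝ) (hγ : ContinuousOn γ I) :
    (∀ x ∈ I, ∀ y ∈ I, x ≠ y →
        ∑ i ∈ Finset.univ.erase (0 : Fin d), (γ x i - γ y i) ^ 2 < (γ x 0 - γ y 0) ^ 2) ∨
    (∀ x ∈ I, ∀ y ∈ I, x ≠ y →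
        (γ x 0 - γ y 0) ^ 2 < ∑ i ∈ Finset.univ.erase (0 : Fin d), (γ x i - γ y i) ^ 2) ∨
    (∃ x ∈ I, ∃ y ∈ I, x ≠ y ∧
        (γ x 0 - γ y 0) ^ 2 = ∑ i ∈ Finset.univ.erase (0 : Fin d), (γ x i - γ y i) ^ 2) :=
  continuous_curve_stl_ftl_or_lightlike_chord_general d I hI γ hγ
end

section
/- Let d ≥ 2 and let β : ℝ → ℝ^d be differentiable on a nondegenerate interval I with β'(t) timelike for every t ∈ I. Then β is injective on I, and its inverse is continuous on the image: for every t₀ ∈ I and every ε > 0 there exists δ > 0 such that for all t ∈ I, if |β(t) − β(t₀)| < δ then |t − t₀| < ε. -/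
/-!
The time component of a timelike curve has nowhere vanishing derivative, so by Darboux's theorem
it is strictly monotone or strictly antitone on the interval. It is therefore injective, and a
strictly monotone function on an interval has a continuous inverse on its image. Since the
distance between two points of the curve bounds the distance between their time components, both
properties pass to the curve.
-/

theorem strictMonoOn_or_strictAntiOn_of_hasDerivAt_ne_zero {f f' : ℝ → ℝ} {I : Set ℝ}
    (hI : I.OrdConnected) (hf : ∀ t ∈ I, HasDerivAt f (f' t) t) (hf' : ∀ t ∈ I, f' t ≠ 0) :
    StrictMonoOn f I ∨ StrictAntiOn f I := by
  have hconv : Convex ℝ I := hI.convex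
  have hcont : ContinuousOn f I := fun t ht => (hf t ht).continuousAt.continuousWithinAt
  have hderiv : ∀ t ∈ interior I, HasDerivWithinAt f (f' t) (interior I) t :=
    fun t ht => (hf t (interior_subset ht)).hasDerivWithinAt
  rcases hasDerivWithinAt_forall_lt_or_forall_gt_of_forall_ne hconv
    (fun t ht => (hf t ht).hasDerivWithinAt) hf' with hneg | hpos
  · exact .inr <| strictAntiOn_of_hasDerivWithinAt_neg hconv hcont hderiv
      fun t ht => hneg t (interior_subset ht)
  · exact .inl <| strictMonoOn_of_hasDerivWithinAt_pos hconv hcont hderiv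
      fun t ht => hpos t (interior_subset ht)

namespace StrictMonoOn

variable {f : ℝ → ℝ} {I : Set ℝ} {t₀ ε : ℝ}

theorem exists_pos_le_map_sub_of_add_le (hI : I.OrdConnected) (hf : StrictMonoOn f I)
    (ht₀ : t₀ ∈ I) (hε : 0 < ε) : ∃ δ > 0, ∀ t ∈ I, t₀ + ε ≤ t → δ ≤ f t - f t₀ := by
  by_cases h : t₀ + ε ∈ I
  · exact ⟨f (t₀ + ε) - f t₀, sub_pos.2 (hf ht₀ h (by linarith)),
      fun t ht hle => sub_le_sub_right (hf.monotoneOn h ht hle) _⟩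
  · exact ⟨1, one_pos, fun t ht hle => absurd (hI.out ht₀ ht ⟨by linarith, hle⟩) h⟩

theorem exists_pos_le_map_sub_of_le_sub (hI : I.OrdConnected) (hf : StrictMonoOn f I)
    (ht₀ : t₀ ∈ I) (hε : 0 < ε) : ∃ δ > 0, ∀ t ∈ I, t ≤ t₀ - ε → δ ≤ f t₀ - f t := by
  by_cases h : t₀ - ε ∈ I
  · exact ⟨f t₀ - f (t₀ - ε), sub_pos.2 (hf h ht₀ (by linarith)),
      fun t ht hle => sub_le_sub_left (hf.monotoneOn ht h hle) _⟩
  · exact ⟨1, one_pos, fun t ht hle => absurd (hI.out ht ht₀ ⟨hle, by linarith⟩) h⟩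

theorem exists_pos_abs_sub_lt_of_abs_map_sub_lt (hI : I.OrdConnected) (hf : StrictMonoOn f I)
    (ht₀ : t₀ ∈ I) (hε : 0 < ε) : ∃ δ > 0, ∀ t ∈ I, |f t - f t₀| < δ → |t - t₀| < ε := by
  obtain ⟨δ₁, hδ₁, hright⟩ := hf.exists_pos_le_map_sub_of_add_le hI ht₀ hε
  obtain ⟨δ₂, hδ₂, hleft⟩ := hf.exists_pos_le_map_sub_of_le_sub hI ht₀ hε
  refine ⟨min δ₁ δ₂, lt_min hδ₁ hδ₂, fun t ht hlt => ?_⟩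
  rw [abs_lt] at hlt ⊢
  have := min_le_left δ₁ δ₂
  have := min_le_right δ₁ δ₂
  constructor
  · by_contra! h
    linarith [hleft t ht (by linarith)]
  · by_contra! h
    linarith [hright t ht (by linarith)]

end StrictMonoOn

theorem StrictAntiOn.exists_pos_abs_sub_lt_of_abs_map_sub_lt {f : ℝ → ℝ} {I : Set ℝ} {t₀ ε : ℝ}
    (hI : I.OrdConnected) (hf : StrictAntiOn f I) (ht₀ : t₀ ∈ I) (hε : 0 < ε) :
    ∃ δ > 0, ∀ t ∈ I, |f t - f t₀| < δ → |t - t₀| < ε := by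
  obtain ⟨δ, hδ, h⟩ := hf.neg.exists_pos_abs_sub_lt_of_abs_map_sub_lt hI ht₀ hε
  exact ⟨δ, hδ, fun t ht hlt => h t ht (by rwa [neg_sub_neg, abs_sub_comm])⟩

theorem abs_le_sqrt_sum_sq {ι : Type*} [Fintype ι] (v : ι → ℝ) (i : ι) :
    |v i| ≤ Real.sqrt (∑ j, v j ^ 2) :=
  Real.abs_le_sqrt <| Finset.single_le_sum (fun j _ => sq_nonneg (v j)) (Finset.mem_univ i)

theorem timelike_curve_injective_continuous_inverse_general (d : ℕ) [NeZero d]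
    (I : Set ℝ) (hI : I.OrdConnected)
    (β β' : ℝ → Fin d → ℝ)
    (hβ : ∀ t ∈ I, HasDerivAt β (β' t) t)
    (htl : ∀ t ∈ I, ∑ i ∈ Finset.univ.erase (0 : Fin d), (β' t i) ^ 2 < (β' t 0) ^ 2) :
    Set.InjOn β I ∧
    ∀ t₀ ∈ I, ∀ ε > (0 : ℝ), ∃ δ > (0 : ℝ), ∀ t ∈ I,
      Real.sqrt (∑ i : Fin d, (β t i - β t₀ i) ^ 2) < δ → |t - t₀| < ε := by
  have htime : ∀ t ∈ I, HasDerivAt (fun s => β s 0) (β' t 0) t :=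
    fun t ht => hasDerivAt_pi.1 (hβ t ht) 0
  have htime' : ∀ t ∈ I, β' t 0 ≠ 0 := fun t ht h0 => by
    have := htl t ht
    rw [h0, sq, zero_mul] at this
    exact this.not_ge (Finset.sum_nonneg fun i _ => sq_nonneg _)
  have hmono := strictMonoOn_or_strictAntiOn_of_hasDerivAt_ne_zero hI htime htime'
  refine ⟨fun s hs t ht hst => ?_, fun t₀ ht₀ ε hε => ?_⟩
  · have : β s 0 = β t 0 := congr_fun hst 0
    exact hmono.elim (·.injOn hs ht this) (·.injOn hs ht this)
  · obtain ⟨δ, hδ, h⟩ := hmono.elim (·.exists_pos_abs_sub_lt_of_abs_map_sub_lt hI ht₀ hε)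
      (·.exists_pos_abs_sub_lt_of_abs_map_sub_lt hI ht₀ hε)
    exact ⟨δ, hδ, fun t ht hlt =>
      h t ht ((abs_le_sqrt_sum_sq (fun i => β t i - β t₀ i) 0).trans_lt hlt)⟩

/-- A timelike curve is injective and has a continuous inverse on its image. -/
theorem timelike_curve_injective_continuous_inverse (d : ℕ) [NeZero d] (hd : 2 ≤ d)
    (I : Set ℝ) (hI : I.OrdConnected) (hI2 : ∃ x ∈ I, ∃ y ∈ I, x ≠ y)
    (β β' : ℝ → Fin d → ℝ)
    (hβ : ∀ t ∈ I, HasDerivAt β (β' t) t)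
    (htl : ∀ t ∈ I, ∑ i ∈ Finset.univ.erase (0 : Fin d), (β' t i) ^ 2 < (β' t 0) ^ 2) :
    Set.InjOn β I ∧
    ∀ t₀ ∈ I, ∀ ε > (0 : ℝ), ∃ δ > (0 : ℝ), ∀ t ∈ I,
      Real.sqrt (∑ i : Fin d, (β t i - β t₀ i) ^ 2) < δ → |t - t₀| < ε :=
  timelike_curve_injective_continuous_inverse_general d I hI β β' hβ htl
end

section
/- Let α : ℝ → ℝ² be twice differentiable on a nondegenerate interval I with α'(t)₁² − α'(t)₂² = 1 for all t ∈ I, and let r ∈ ℝ satisfy r²·(α''(t)₂² − α''(t)₁²) < 1 for all t ∈ I. Define β(t) := (α(t)₁ + r·α'(t)₂, α(t)₂ + r·α'(t)₁). Then for every t ∈ I there is a unique real λ with α''(t) = λ·(α'(t)₂, α'(t)₁); moreover β'(t) = (1 + r·λ)·α'(t), one has 1 + r·λ > 0, and β'(t) is timelike (β'(t)₁² > β'(t)₂²). -/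
/-!
Differentiating the constant Minkowski length of `α'` shows that `α''` is Minkowski-orthogonal
to `α'`; in the plane the orthogonal complement of the timelike vector `α' t` is spanned by its
swap, so `α'' t = λ • (α' t).swap`. The companion curve is `β = α + r • α'.swap`, whence
`β' = α' + r • (α'' t).swap = (1 + r λ) • α'`. Since `α'` has Minkowski length one,
`α''₂² − α''₁² = λ²`, so the hypothesis reads `(r λ)² < 1` and forces `1 + r λ > 0`.
-/

section Prod

variable {𝕜 : Type*} [NontriviallyNormedField 𝕜]
  {E F : Type*} [NormedAddCommGroup E] [NormedSpace 𝕜 E] [NormedAddCommGroup F] [NormedSpace 𝕜 F]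
  {f : 𝕜 → E × F} {f' : E × F} {x : 𝕜}

theorem HasDerivAt.fst (h : HasDerivAt f f' x) : HasDerivAt (fun s => (f s).1) f'.1 x :=
  (ContinuousLinearMap.fst 𝕜 E F).hasFDerivAt.comp_hasDerivAt x h

theorem HasDerivAt.snd (h : HasDerivAt f f' x) : HasDerivAt (fun s => (f s).2) f'.2 x :=
  (ContinuousLinearMap.snd 𝕜 E F).hasFDerivAt.comp_hasDerivAt x h

theorem HasDerivAt.swap (h : HasDerivAt f f' x) : HasDerivAt (fun s => (f s).swap) f'.swap x :=
  h.snd.prodMk h.fst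

end Prod

theorem Set.OrdConnected.uniqueDiffWithinAt {I : Set ℝ} (hI : I.OrdConnected) (hI2 : I.Nontrivial)
    {t : ℝ} (ht : t ∈ I) : UniqueDiffWithinAt ℝ I t :=
  uniqueDiffWithinAt_convex hI.convex (hI.convex.nontrivial_iff_nonempty_interior.1 hI2)
    (subset_closure ht)

theorem HasDerivAt.eq_zero_of_forall_eq_const {𝕜 F : Type*} [NontriviallyNormedField 𝕜]
    [NormedAddCommGroup F] [NormedSpace 𝕜 F] {f : 𝕜 → F} {f' c : F} {s : Set 𝕜} {t : 𝕜}
    (hf : HasDerivAt f f' t) (hs : UniqueDiffWithinAt 𝕜 s t) (ht : t ∈ s)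
    (hc : ∀ x ∈ s, f x = c) : f' = 0 :=
  hs.eq_deriv s hf.hasDerivWithinAt ((hasDerivWithinAt_const t s c).congr hc (hc t ht))

theorem minkowski_orthogonal_of_forall_minkowski_sq_eq {v : ℝ → ℝ × ℝ} {a : ℝ × ℝ} {I : Set ℝ}
    {t : ℝ} {c : ℝ} (hv : HasDerivAt v a t) (hI : UniqueDiffWithinAt ℝ I t) (ht : t ∈ I)
    (hc : ∀ s ∈ I, (v s).1 ^ 2 - (v s).2 ^ 2 = c) :
    (v t).1 * a.1 - (v t).2 * a.2 = 0 := by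
  have hderiv : HasDerivAt (fun s => (v s).1 ^ 2 - (v s).2 ^ 2)
      (2 * ((v t).1 * a.1 - (v t).2 * a.2)) t :=
    ((hv.fst.fun_pow 2).fun_sub (hv.snd.fun_pow 2)).congr_deriv (by ring)
  simpa using hderiv.eq_zero_of_forall_eq_const hI ht hc

theorem existsUnique_eq_mul_swap_of_minkowski_orthogonal {v a : ℝ × ℝ} (hv : v.1 ≠ 0)
    (h : v.1 * a.1 - v.2 * a.2 = 0) : ∃! l : ℝ, a.1 = l * v.2 ∧ a.2 = l * v.1 := by
  refine ⟨a.2 / v.1, ⟨?_, (div_mul_cancel₀ _ hv).symm⟩, fun l hl => ?_⟩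
  · field_simp
    linear_combination h
  · rw [hl.2, mul_div_cancel_right₀ _ hv]

theorem fst_ne_zero_of_minkowski_sq_eq_one {v : ℝ × ℝ} (hv : v.1 ^ 2 - v.2 ^ 2 = 1) : v.1 ≠ 0 := by
  intro h
  nlinarith [sq_nonneg v.2]

theorem one_add_mul_pos_of_sq_mul_sq_lt_one {r l : ℝ} (h : r ^ 2 * l ^ 2 < 1) : 0 < 1 + r * l := by
  have : |r * l| < 1 := by rwa [← sq_lt_one_iff_abs_lt_one, mul_pow]
  linarith [neg_abs_le (r * l)]

/-- The companion curve at constant Minkowski distance `r` from a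
well-parametrized planar timelike curve is a timelike curve. -/
theorem minkowski_companion_curve (I : Set ℝ)
    (hI : I.OrdConnected) (hI2 : ∃ x ∈ I, ∃ y ∈ I, x ≠ y)
    (α α' α'' : ℝ → ℝ × ℝ)
    (hα : ∀ t ∈ I, HasDerivAt α (α' t) t)
    (hα' : ∀ t ∈ I, HasDerivAt α' (α'' t) t)
    (hwp : ∀ t ∈ I, (α' t).1 ^ 2 - (α' t).2 ^ 2 = 1)
    (r : ℝ) (hr : ∀ t ∈ I, r ^ 2 * ((α'' t).2 ^ 2 - (α'' t).1 ^ 2) < 1)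
    (β : ℝ → ℝ × ℝ)
    (hβ : β = fun t => ((α t).1 + r * (α' t).2, (α t).2 + r * (α' t).1)) :
    ∀ t ∈ I,
      (∃! l : ℝ, (α'' t).1 = l * (α' t).2 ∧ (α'' t).2 = l * (α' t).1) ∧
      ∀ l : ℝ, ((α'' t).1 = l * (α' t).2 ∧ (α'' t).2 = l * (α' t).1) →
        HasDerivAt β ((1 + r * l) • α' t) t ∧ 0 < 1 + r * l ∧
        ((1 + r * l) * (α' t).2) ^ 2 < ((1 + r * l) * (α' t).1) ^ 2 := by
  intro t ht
  have horth := minkowski_orthogonal_of_forall_minkowski_sq_eq (hα' t ht)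
    (hI.uniqueDiffWithinAt hI2 ht) ht hwp
  refine ⟨existsUnique_eq_mul_swap_of_minkowski_orthogonal
    (fst_ne_zero_of_minkowski_sq_eq_one (hwp t ht)) horth, fun l ⟨hl1, hl2⟩ => ?_⟩
  have haccel : (α'' t).2 ^ 2 - (α'' t).1 ^ 2 = l ^ 2 := by
    rw [hl1, hl2]
    linear_combination l ^ 2 * hwp t ht
  have hpos : 0 < 1 + r * l := one_add_mul_pos_of_sq_mul_sq_lt_one (haccel ▸ hr t ht)
  refine ⟨?_, hpos, ?_⟩
  · have hβ' : β = fun s => α s + r • (α' s).swap := hβ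
    have hswap : (α'' t).swap = l • α' t := Prod.ext hl2 hl1
    rw [hβ', add_smul, one_smul, mul_smul, ← hswap]
    exact (hα t ht).add ((hα' t ht).swap.const_smul r)
  · rw [mul_pow, mul_pow]
    exact mul_lt_mul_of_pos_left (by linarith [hwp t ht]) (pow_pos hpos 2)
end
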